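/- arXiv:cs/0508070 — 7 statements merged into one kernel-verified Lean document; each statement's English description precedes it below -/
import Mathlib

section
/- With the setup of the previous statement, the upper bound is tight, i.e. Φ(θ̄) = ∑ i, ρ i * Φ(θ i), if and only if the intersection ⋂_{i : ρ i > 0} OPT(θ i) is nonempty. -/
open scoped RealInnerProductSpace

/-- Tree agreement (Proposition 1, second part): the Jensen bound
`Φ(θbar) ≤ ∑ i, ρ i * Φ(θ i)` is tight (holds with equality) if and only if the
intersection of the optimizer sets `OPT(θ i)` over indices with `ρ i > 0` is nonempty. -/
theorem stmt_4 {d : ℕ} {ι : Type*} [Fintype ι] {X : Type*} [Fintype X] [Nonempty X]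
    (φ : X → EuclideanSpace ℝ (Fin d))
    (ρ : ι → ℝ) (hρ : ∀ i, 0 ≤ ρ i) (hsum : ∑ i, ρ i = 1)
    (θ : ι → EuclideanSpace ℝ (Fin d)) (θbar : EuclideanSpace ℝ (Fin d))
    (hcomb : ∑ i, ρ i • θ i = θbar) :
    (Finset.univ.sup' Finset.univ_nonempty (fun x => ⟪θbar, φ x⟫) =
        ∑ i, ρ i * Finset.univ.sup' Finset.univ_nonempty (fun x => ⟪θ i, φ x⟫)) ↔
      (⋂ i ∈ {i : ι | 0 < ρ i},
        {x : X | ∀ x' : X, ⟪θ i, φ x'⟫ ≤ ⟪θ i, φ x⟫}).Nonempty := by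
  set Φ : ι → ℝ := fun i => Finset.univ.sup' Finset.univ_nonempty (fun x => ⟪θ i, φ x⟫)
    with hΦ
  have hbar : ∀ x : X, ⟪θbar, φ x⟫ = ∑ i, ρ i * ⟪θ i, φ x⟫ := by
    intro x
    rw [← hcomb, sum_inner]
    exact Finset.sum_congr rfl fun i _ => real_inner_smul_left _ _ _
  have hΦle : ∀ i (x : X), ⟪θ i, φ x⟫ ≤ Φ i := by
    intro i x
    rw [hΦ]
    exact Finset.le_sup' (fun x => ⟪θ i, φ x⟫) (Finset.mem_univ x)
  constructor
  · intro heq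
    obtain ⟨x, _, hx⟩ := Finset.exists_mem_eq_sup' (Finset.univ_nonempty (α := X))
      (fun x => ⟪θbar, φ x⟫)
    have hx' : ∑ i, ρ i * ⟪θ i, φ x⟫ = ∑ i, ρ i * Φ i := by
      rw [← hbar x, ← hx, heq]
    have hterm : ∀ i ∈ Finset.univ, ρ i * ⟪θ i, φ x⟫ = ρ i * Φ i := by
      apply Finset.sum_eq_sum_iff_of_le ?_ |>.mp hx'
      intro i _
      exact mul_le_mul_of_nonneg_left (hΦle i x) (hρ i)
    refine ⟨x, ?_⟩
    simp only [Set.mem_iInter, Set.mem_setOf_eq]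
    intro i hi x'
    have := hterm i (Finset.mem_univ i)
    have hval : ⟪θ i, φ x⟫ = Φ i := by
      exact mul_left_cancel₀ (ne_of_gt hi) this
    rw [hval]
    exact hΦle i x'
  · intro ⟨x, hx⟩
    simp only [Set.mem_iInter, Set.mem_setOf_eq] at hx
    have hval : ∀ i, 0 < ρ i → ⟪θ i, φ x⟫ = Φ i := by
      intro i hi
      exact le_antisymm (hΦle i x) (Finset.sup'_le _ _ fun x' _ => hx i hi x')
    have hle : Finset.univ.sup' Finset.univ_nonempty (fun x => ⟪θbar, φ x⟫) ≤
        ∑ i, ρ i * Φ i := by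
      apply Finset.sup'_le
      intro x' _
      rw [hbar x']
      exact Finset.sum_le_sum fun i _ =>
        mul_le_mul_of_nonneg_left (hΦle i x') (hρ i)
    have hge : ∑ i, ρ i * Φ i ≤
        Finset.univ.sup' Finset.univ_nonempty (fun x => ⟪θbar, φ x⟫) := by
      have : ∑ i, ρ i * Φ i = ⟪θbar, φ x⟫ := by
        rw [hbar x]
        refine Finset.sum_congr rfl fun i _ => ?_
        rcases (hρ i).lt_or_eq with h | h
        · rw [hval i h]
        · rw [← h, zero_mul, zero_mul]
      rw [this]
      exact Finset.le_sup' (fun x => ⟪θbar, φ x⟫) (Finset.mem_univ x)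
    exact le_antisymm hle hge
end

section
/- For the 3-cycle graph on vertices {1,2,3} with binary variables X_s = {0,1}, the pseudomarginal vector τ with τ_{s;j} = 1/2 for all s, j, and τ_{st;jk} = 1/2 if j ≠ k and 0 if j = k for all three edges, belongs to LOCAL(G) but not to MARG(G). -/
/-- Pseudomarginal vectors for the 3-cycle with binary variables: a single-node
component for each vertex and a pairwise component for each (ordered representative
of an) edge. -/
abbrev PM3 := (Fin 3 → Fin 2 → ℝ) × (Fin 3 → Fin 3 → Fin 2 → Fin 2 → ℝ)

/-- The three edges of the 3-cycle, each with a fixed orientation. -/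
def edges3 : Finset (Fin 3 × Fin 3) := {(0, 1), (1, 2), (0, 2)}

/-- The indicator vector `φ(x)` of a configuration `x ∈ {0,1}^3` (zero outside edges). -/
noncomputable def phi3 (x : Fin 3 → Fin 2) : PM3 :=
  (fun s j => if x s = j then 1 else 0,
   fun s t j k =>
     if (s, t) ∈ edges3 then
       (if x s = j then (1 : ℝ) else 0) * (if x t = k then 1 else 0)
     else 0)

/-- The local consistency polytope `LOCAL(G)` for the binary 3-cycle: nonnegativity,
unit normalization of single-node components, and marginalization of each pairwise
component to the corresponding single-node components. -/
def LOCAL3 : Set PM3 :=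
  { τ | (∀ (s : Fin 3) (j : Fin 2), 0 ≤ τ.1 s j) ∧
        (∀ p ∈ edges3, ∀ j k : Fin 2, 0 ≤ τ.2 p.1 p.2 j k) ∧
        (∀ s : Fin 3, ∑ j, τ.1 s j = 1) ∧
        (∀ p ∈ edges3, ∀ j : Fin 2, ∑ k, τ.2 p.1 p.2 j k = τ.1 p.1 j) ∧
        (∀ p ∈ edges3, ∀ k : Fin 2, ∑ j, τ.2 p.1 p.2 j k = τ.1 p.2 k) }

/-- The marginal polytope `MARG(G)` for the binary 3-cycle: the convex hull of the
indicator vectors `φ(x)` over configurations `x ∈ {0,1}^3`. -/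
noncomputable def MARG3 : Set PM3 := convexHull ℝ (Set.range phi3)

/-- Separating linear functional: total disagreement mass over the three edges. -/
noncomputable def Lsep : PM3 →ₗ[ℝ] ℝ where
  toFun p := p.2 0 1 0 1 + p.2 0 1 1 0 + p.2 1 2 0 1 + p.2 1 2 1 0
    + p.2 0 2 0 1 + p.2 0 2 1 0
  map_add' p q := by simp [Prod.add_def]; ring
  map_smul' c p := by simp [Prod.smul_def]; ring

lemma Lsep_phi3_le (x : Fin 3 → Fin 2) : Lsep (phi3 x) ≤ 2 := by
  have h0 : x 0 = 0 ∨ x 0 = 1 := by omega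
  have h1 : x 1 = 0 ∨ x 1 = 1 := by omega
  have h2 : x 2 = 0 ∨ x 2 = 1 := by omega
  rcases h0 with h0 | h0 <;> rcases h1 with h1 | h1 <;> rcases h2 with h2 | h2 <;>
    norm_num [Lsep, phi3, edges3, h0, h1, h2]

/-- Example 3 (fractional vertex): the pseudomarginal with uniform node marginals
`(1/2, 1/2)` and pairwise marginals placing mass `1/2` on each disagreement `(j ≠ k)`
and `0` on agreements lies in `LOCAL(G)` but not in `MARG(G)`. -/
theorem stmt_10 :
    (((fun _ _ => (1 / 2 : ℝ)),
      (fun s t j k =>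
        if (s, t) ∈ edges3 then (if j = k then 0 else 1 / 2) else 0)) : PM3) ∈ LOCAL3 ∧
    (((fun _ _ => (1 / 2 : ℝ)),
      (fun s t j k =>
        if (s, t) ∈ edges3 then (if j = k then 0 else 1 / 2) else 0)) : PM3) ∉ MARG3 := by
  constructor
  · refine ⟨fun s j => by norm_num, fun p hp j k => ?_, fun s => ?_, fun p hp j => ?_,
      fun p hp k => ?_⟩
    · fin_cases hp <;> fin_cases j <;> fin_cases k <;> norm_num [edges3]
    · norm_num [Fin.sum_univ_two]
    · fin_cases hp <;> fin_cases j <;> simp [edges3, Fin.sum_univ_two]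
    · fin_cases hp <;> fin_cases k <;> simp [edges3, Fin.sum_univ_two]
  · intro hmem
    have hconv : Convex ℝ {p : PM3 | Lsep p ≤ 2} := by
      have : {p : PM3 | Lsep p ≤ 2} = Lsep ⁻¹' (Set.Iic 2) := rfl
      rw [this]
      exact (convex_Iic (2:ℝ)).linear_preimage Lsep
    have hsub : Set.range phi3 ⊆ {p : PM3 | Lsep p ≤ 2} := by
      rintro _ ⟨x, rfl⟩; exact Lsep_phi3_le x
    have := convexHull_min hsub hconv hmem
    simp only [Set.mem_setOf_eq, Lsep, LinearMap.coe_mk, AddHom.coe_mk] at this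
    norm_num [edges3] at this
end

section
/- For the 3-cycle graph with binary variables and cost θ̄ given by θ̄_{s;j} = 0 and θ̄_{st;jk} = −β if j = k, 0 if j ≠ k (for β ∈ ℝ with β < 0): max over τ ∈ LOCAL(G) of ⟨θ̄, τ⟩ equals −3β, while max over x ∈ {0,1}^3 of ⟨θ̄, φ(x)⟩ equals −2β; hence the LP relaxation over LOCAL(G) is strictly loose. -/
/-- The linear cost `⟨θ̄, τ⟩` for the parameter with `θ̄_{s;j} = 0` and
`θ̄_{st;jk} = −β` for `j ≠ k`, `0` for `j = k`, on each edge of the 3-cycle. -/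
noncomputable def cost3 (β : ℝ) (τ : PM3) : ℝ :=
  (∑ s : Fin 3, ∑ j : Fin 2, (0 : ℝ) * τ.1 s j) +
    ∑ p ∈ edges3, ∑ j : Fin 2, ∑ k : Fin 2,
      (if j = k then 0 else -β) * τ.2 p.1 p.2 j k

lemma edge_bound (β : ℝ) (hβ : β < 0) (τ : PM3) (hτ : τ ∈ LOCAL3)
    (p : Fin 3 × Fin 3) (hp : p ∈ edges3) :
    ∑ j : Fin 2, ∑ k : Fin 2, (if j = k then 0 else -β) * τ.2 p.1 p.2 j k ≤ -β := by
  obtain ⟨h1, h2, h3, h4, h5⟩ := hτ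
  have hsum : ∑ j : Fin 2, ∑ k : Fin 2, τ.2 p.1 p.2 j k = 1 := by
    have := h3 p.1
    calc ∑ j : Fin 2, ∑ k : Fin 2, τ.2 p.1 p.2 j k
        = ∑ j : Fin 2, τ.1 p.1 j := Finset.sum_congr rfl (fun j _ => h4 p hp j)
      _ = 1 := h3 p.1
  have h00 := h2 p hp 0 0
  have h11 := h2 p hp 1 1
  simp only [Fin.sum_univ_two] at hsum ⊢
  norm_num
  nlinarith

/-- Example 3 (`β < 0`, disagreement-favoring case): the LP over `LOCAL(G)` attains the
value `−3β`, strictly exceeding the true MAP value `−2β = max_x ⟨θ̄, φ(x)⟩`; hence the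
tree relaxation is loose. -/
theorem stmt_11 (β : ℝ) (hβ : β < 0) :
    IsGreatest (cost3 β '' LOCAL3) (-3 * β) ∧
    IsGreatest (Set.range fun x : Fin 3 → Fin 2 => cost3 β (phi3 x)) (-2 * β) ∧
    -2 * β < -3 * β := by
  refine ⟨⟨?_, ?_⟩, ⟨?_, ?_⟩, by linarith⟩
  · -- membership: witness τ⋆
    refine ⟨(fun s j => 1/2, fun s t j k => if j = k then 0 else 1/2), ?_, ?_⟩
    · refine ⟨fun s j => by norm_num, fun p hp j k => by dsimp only; split <;> norm_num,
        fun s => by simp [Fin.sum_univ_two], fun p hp j => ?_, fun p hp k => ?_⟩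
      · fin_cases j <;> simp [Fin.sum_univ_two]
      · fin_cases k <;> simp [Fin.sum_univ_two]
    · simp [cost3, edges3, Fin.sum_univ_two]
      ring
  · -- upper bound for LP
    rintro v ⟨τ, hτ, rfl⟩
    have hb : ∀ p ∈ edges3, ∑ j : Fin 2, ∑ k : Fin 2,
        (if j = k then 0 else -β) * τ.2 p.1 p.2 j k ≤ -β :=
      fun p hp => edge_bound β hβ τ hτ p hp
    have h01 := hb (0,1) (by decide)
    have h12 := hb (1,2) (by decide)
    have h02 := hb (0,2) (by decide)
    simp only [cost3, zero_mul, Finset.sum_const_zero, zero_add]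
    rw [show (edges3 : Finset (Fin 3 × Fin 3)) = {(0,1), (1,2), (0,2)} from rfl]
    rw [Finset.sum_insert (by decide), Finset.sum_insert (by decide),
      Finset.sum_singleton]
    linarith
  · -- MAP witness x = (0,1,0)
    refine ⟨![0, 1, 0], ?_⟩
    simp [cost3, phi3, edges3, Fin.sum_univ_two]
    ring
  · -- MAP upper bound
    rintro v ⟨x, rfl⟩
    obtain ⟨a, ha⟩ : ∃ a, x 0 = a := ⟨_, rfl⟩
    obtain ⟨b, hb⟩ : ∃ b, x 1 = b := ⟨_, rfl⟩
    obtain ⟨c, hc⟩ : ∃ c, x 2 = c := ⟨_, rfl⟩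
    simp only [cost3, phi3, zero_mul, Finset.sum_const_zero, zero_add]
    rw [show (edges3 : Finset (Fin 3 × Fin 3)) = {(0,1), (1,2), (0,2)} from rfl]
    rw [Finset.sum_insert (by decide), Finset.sum_insert (by decide),
      Finset.sum_singleton]
    fin_cases a <;> fin_cases b <;> fin_cases c <;>
      simp [edges3, Fin.sum_univ_two, ha, hb, hc] <;> linarith
end

section
/- Let T = (V, E(T)) be a finite tree and p(x) ∝ ∏_s ν_s(x_s) ∏_{(s,t)∈E(T)} ν_{st}(x_s,x_t)/(ν_s(x_s)ν_t(x_t)), where ν_s, ν_{st} are strictly positive functions satisfying the edgewise consistency condition: for every edge (s,t) there is κ > 0 with max_{x_t'} ν_{st}(x_s, x_t') = κ ν_s(x_s) for all x_s (and symmetrically in the other direction). Then ν_s and ν_{st} are, up to positive multiplicative constants, the single-node and pairwise max-marginals of p: ν_s(x_s) ∝ max_{x : x_s fixed} p(x) and ν_{st}(x_s,x_t) ∝ max_{x : (x_s,x_t) fixed} p(x). -/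
open Finset SimpleGraph

/-- The tree-structured distribution (up to normalization) defined by candidate
max-marginals `ν1, ν2` via the factorization
`q(x) = ∏_s ν_s(x_s) · ∏_{(s,t) ∈ E} ν_{st}(x_s, x_t) / (ν_s(x_s) ν_t(x_t))`. -/
noncomputable def treeDist {V : Type*} [Fintype V] {X : V → Type*}
    (E : Finset (V × V)) (ν1 : (s : V) → X s → ℝ)
    (ν2 : (s t : V) → X s → X t → ℝ) (x : (v : V) → X v) : ℝ :=
  (∏ s, ν1 s (x s)) *
    ∏ p ∈ E, ν2 p.1 p.2 (x p.1) (x p.2) / (ν1 p.1 (x p.1) * ν1 p.2 (x p.2))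



lemma tree_root_struct {V : Type*} {G : SimpleGraph V} (hT : G.IsTree) (s : V) :
    ∃ (parent : V → V) (L : V → ℕ),
      (∀ v, v ≠ s → G.Adj v (parent v) ∧ L (parent v) + 1 = L v) ∧
      (∀ u v, G.Adj u v → (u ≠ s ∧ parent u = v) ∨ (v ≠ s ∧ parent v = u)) := by
  classical
  have hEU := hT.existsUnique_path
  set P : (v : V) → G.Walk v s := fun v => (hEU v s).choose with hPdef
  have hP : ∀ v, (P v).IsPath := fun v => (hEU v s).choose_spec.1
  have hUniq : ∀ v (q : G.Walk v s), q.IsPath → q = P v := fun v q hq =>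
    ((hEU v s).choose_spec.2 q hq)
  refine ⟨fun v => (P v).getVert 1, fun v => (P v).length, ?_, ?_⟩
  · intro v hv
    dsimp only
    obtain ⟨w, hadj, q, hq⟩ := Walk.exists_eq_cons_of_ne hv (P v)
    have hqpath : q.IsPath := by
      have := hP v; rw [hq, Walk.cons_isPath_iff] at this; exact this.1
    have hqP : q = P w := hUniq w q hqpath
    have hpar : (P v).getVert 1 = w := by
      rw [hq, Walk.getVert_cons_succ, Walk.getVert_zero]
    rw [hpar]
    exact ⟨hadj, by rw [← hqP, hq]; simp⟩
  · intro u v hadj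
    by_cases hu : u ∈ (P v).support
    · right
      -- P u = dropUntil, and v ∉ support (P u)
      have hPu : (P v).dropUntil u hu = P u := hUniq u _ ((hP v).dropUntil hu)
      have hvns : v ∉ (P u).support := by
        rw [← hPu]
        intro hmem
        have hspec := Walk.take_spec (P v) hu
        have hnodup : ((P v).support).Nodup := (hP v).support_nodup
        rw [← hspec, Walk.support_append] at hnodup
        have hdisj := List.disjoint_of_nodup_append hnodup
        have hv1 : v ∈ ((P v).takeUntil u hu).support := Walk.start_mem_support _
        rcases (by rw [Walk.support_eq_cons ((P v).dropUntil u hu)] at hmem; exact List.mem_cons.mp hmem :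
            v = u ∨ v ∈ ((P v).dropUntil u hu).support.tail) with h | h
        · exact hadj.ne h.symm
        · exact hdisj hv1 h
      have hvns' : v ≠ s := fun h => hvns (h ▸ Walk.end_mem_support (P u))
      refine ⟨hvns', ?_⟩
      have : (Walk.cons hadj.symm (P u)).IsPath := (hP u).cons hvns
      have := hUniq v _ this
      dsimp only
      rw [← this, Walk.getVert_cons_succ, Walk.getVert_zero]
    · left
      have huns : u ≠ s := fun h => hu (h ▸ Walk.end_mem_support (P v))
      refine ⟨huns, ?_⟩
      have : (Walk.cons hadj (P v)).IsPath := (hP v).cons hu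
      have := hUniq u _ this
      dsimp only
      rw [← this, Walk.getVert_cons_succ, Walk.getVert_zero]


noncomputable def buildAux {V : Type*} [DecidableEq V] {X : V → Type*} (s : V)
    (parent : V → V) (L : V → ℕ) (hL : ∀ v, v ≠ s → L (parent v) < L v)
    (a : X s) (pick : (v : V) → X (parent v) → X v) : (v : V) → X v
  | v =>
    if h : v = s then cast (congrArg X h).symm a
    else pick v (buildAux s parent L hL a pick (parent v))
  termination_by v => L v
  decreasing_by exact hL v h

lemma buildAux_self {V : Type*} [DecidableEq V] {X : V → Type*} (s : V)
    (parent : V → V) (L : V → ℕ) (hL : ∀ v, v ≠ s → L (parent v) < L v)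
    (a : X s) (pick : (v : V) → X (parent v) → X v) :
    buildAux s parent L hL a pick s = a := by
  rw [buildAux]; simp

lemma buildAux_ne {V : Type*} [DecidableEq V] {X : V → Type*} (s : V)
    (parent : V → V) (L : V → ℕ) (hL : ∀ v, v ≠ s → L (parent v) < L v)
    (a : X s) (pick : (v : V) → X (parent v) → X v) {v : V} (h : v ≠ s) :
    buildAux s parent L hL a pick v
      = pick v (buildAux s parent L hL a pick (parent v)) := by
  rw [buildAux]; simp [h]



private lemma amul (a n d : ℝ) (ha : a ≠ 0) : a * (n / (a * d)) = n / d := by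
  rw [← mul_div_assoc]; exact mul_div_mul_left n d ha

private lemma core {V : Type*} [Fintype V] [DecidableEq V]
    (X : V → Type*) [∀ v, Fintype (X v)] [∀ v, Nonempty (X v)]
    (E : Finset (V × V))
    (hE_ne : ∀ p ∈ E, p.1 ≠ p.2) (hE_orient : ∀ p ∈ E, (p.2, p.1) ∉ E)
    (ν1 : (s : V) → X s → ℝ) (ν2 : (s t : V) → X s → X t → ℝ)
    (hν1 : ∀ (s : V) (a : X s), 0 < ν1 s a)
    (hν2 : ∀ p ∈ E, ∀ (a : X p.1) (b : X p.2), 0 < ν2 p.1 p.2 a b)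
    (hcons1 : ∀ p ∈ E, ∃ κ : ℝ, 0 < κ ∧
      ∀ a : X p.1, (⨆ b : X p.2, ν2 p.1 p.2 a b) = κ * ν1 p.1 a)
    (hcons2 : ∀ p ∈ E, ∃ κ : ℝ, 0 < κ ∧
      ∀ b : X p.2, (⨆ a : X p.1, ν2 p.1 p.2 a b) = κ * ν1 p.2 b)
    (s : V) (parent : V → V) (L : V → ℕ)
    (hpar : ∀ v, v ≠ s →
      (SimpleGraph.fromRel fun s t => (s, t) ∈ E).Adj v (parent v) ∧ L (parent v) + 1 = L v)
    (hsurj : ∀ u v, (SimpleGraph.fromRel fun s t => (s, t) ∈ E).Adj u v →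
      (u ≠ s ∧ parent u = v) ∨ (v ≠ s ∧ parent v = u)) :
    ∃ (T : (v : V) → ((v : V) → X v) → ℝ) (K : V → ℝ),
      (∀ x, treeDist E ν1 ν2 x = ν1 s (x s) * ∏ v ∈ univ.erase s, T v x) ∧
      (∀ v, v ≠ s → ∀ x, 0 < T v x) ∧
      (∀ v, v ≠ s → 0 < K v) ∧
      (∀ v, v ≠ s → ∀ x, T v x ≤ K v) ∧
      (∀ v, v ≠ s → ∀ b : X (parent v), ∃ c : X v,
        ∀ x, x v = c → x (parent v) = b → T v x = K v) ∧
      (∀ t, t ≠ s → parent t = s → (s, t) ∈ E →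
        ∀ x, ν1 s (x s) * T t x = ν2 s t (x s) (x t)) := by
  classical
  set G := SimpleGraph.fromRel fun s t => (s, t) ∈ E with hG
  -- the oriented parent edge of each non-root vertex
  set φ : V → V × V := fun v => if (v, parent v) ∈ E then (v, parent v) else (parent v, v)
    with hφ
  have hE2 : ∀ v, v ≠ s → (v, parent v) ∈ E ∨ ((parent v, v) ∈ E ∧ (v, parent v) ∉ E) := by
    intro v hv
    have hadj := (hpar v hv).1
    rw [SimpleGraph.fromRel_adj] at hadj
    by_cases h : (v, parent v) ∈ E
    · exact Or.inl h
    · exact Or.inr ⟨hadj.2.resolve_left h, h⟩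
  have hφE : ∀ v, v ≠ s → φ v ∈ E := by
    intro v hv
    rcases hE2 v hv with h | ⟨h, h'⟩
    · simp only [hφ, if_pos h]; exact h
    · simp only [hφ, if_neg h']; exact h
  set g : V × V → ((v : V) → X v) → ℝ :=
    fun e x => ν2 e.1 e.2 (x e.1) (x e.2) / (ν1 e.1 (x e.1) * ν1 e.2 (x e.2)) with hg
  refine ⟨fun v x => ν1 v (x v) * g (φ v) x, fun v =>
    if h : (v, parent v) ∈ E then (hcons2 _ h).choose
    else if h2 : (parent v, v) ∈ E then (hcons1 _ h2).choose else 1,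
    ?_, ?_, ?_, ?_, ?_, ?_⟩
  · -- decomposition
    intro x
    rw [treeDist]
    have h1 : (∏ v, ν1 v (x v)) = ν1 s (x s) * ∏ v ∈ univ.erase s, ν1 v (x v) :=
      (Finset.mul_prod_erase univ (fun v => ν1 v (x v)) (mem_univ s)).symm
    have h2 : (∏ p ∈ E, ν2 p.1 p.2 (x p.1) (x p.2) / (ν1 p.1 (x p.1) * ν1 p.2 (x p.2)))
        = ∏ v ∈ univ.erase s, g (φ v) x := by
      refine (Finset.prod_bij (fun v _ => φ v) ?_ ?_ ?_ ?_).symm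
      · intro v hv; exact hφE v (Finset.mem_erase.mp hv).1
      · intro v hv w hw hvw
        have hv' := (Finset.mem_erase.mp hv).1
        have hw' := (Finset.mem_erase.mp hw).1
        have hLv := (hpar v hv').2
        have hLw := (hpar w hw').2
        have hfv : φ v = (v, parent v) ∨ φ v = (parent v, v) := by
          simp only [hφ]; split <;> simp
        have hfw : φ w = (w, parent w) ∨ φ w = (parent w, w) := by
          simp only [hφ]; split <;> simp
        have habs : ¬ (parent v = w ∧ parent w = v) := by
          rintro ⟨h1, h2⟩; rw [h1] at hLv; rw [h2] at hLw; omega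
        rcases hfv with hfv | hfv <;> rcases hfw with hfw | hfw <;>
            rw [hfv, hfw, Prod.mk.injEq] at hvw
        · exact hvw.1
        · exact absurd ⟨hvw.2, hvw.1.symm⟩ habs
        · exact absurd ⟨hvw.1, hvw.2.symm⟩ habs
        · exact hvw.2
      · intro e he
        have hadj : G.Adj e.1 e.2 := by
          rw [hG, SimpleGraph.fromRel_adj]
          exact ⟨hE_ne e he, Or.inl (by simpa using he)⟩
        rcases hsurj _ _ hadj with ⟨hne, hp⟩ | ⟨hne, hp⟩
        · refine ⟨e.1, Finset.mem_erase.mpr ⟨hne, mem_univ _⟩, ?_⟩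
          simp only [hφ, hp]
          rw [if_pos (by simpa using he)]
        · refine ⟨e.2, Finset.mem_erase.mpr ⟨hne, mem_univ _⟩, ?_⟩
          simp only [hφ, hp]
          rw [if_neg (by simpa using hE_orient e he)]
      · intro e he; rfl
    rw [h1, h2, Finset.prod_mul_distrib]
    ring
  · -- positivity of T
    intro v hv x
    have he := hφE v hv
    have h2 := hν2 _ he (x (φ v).1) (x (φ v).2)
    have := hν1 (φ v).1 (x (φ v).1)
    have := hν1 (φ v).2 (x (φ v).2)
    have := hν1 v (x v)
    positivity
  · -- positivity of K
    intro v hv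
    rcases hE2 v hv with hA | ⟨hB, hnA⟩
    · simp only [dif_pos hA]; exact (hcons2 _ hA).choose_spec.1
    · simp only [dif_neg hnA, dif_pos hB]; exact (hcons1 _ hB).choose_spec.1
  · -- bound T ≤ K
    intro v hv x
    have hd := hν1 (parent v) (x (parent v))
    have ha := hν1 v (x v)
    rcases hE2 v hv with hA | ⟨hB, hnA⟩
    · obtain ⟨hκ, hspec⟩ := (hcons2 _ hA).choose_spec
      dsimp only at hspec
      simp only [hφ, hg, if_pos hA, dif_pos hA]
      have key : ν1 v (x v) * (ν2 v (parent v) (x v) (x (parent v)) /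
          (ν1 v (x v) * ν1 (parent v) (x (parent v))))
          = ν2 v (parent v) (x v) (x (parent v)) / ν1 (parent v) (x (parent v)) := by
        field_simp
      rw [key, div_le_iff₀ hd]
      calc ν2 v (parent v) (x v) (x (parent v))
          ≤ ⨆ a : X v, ν2 v (parent v) a (x (parent v)) :=
            le_ciSup (f := fun a : X v => ν2 v (parent v) a (x (parent v)))
              (Set.Finite.bddAbove (Set.finite_range _)) (x v)
        _ = _ := hspec (x (parent v))
    · obtain ⟨hκ, hspec⟩ := (hcons1 _ hB).choose_spec
      dsimp only at hspec
      simp only [hφ, hg, if_neg hnA, dif_neg hnA, dif_pos hB]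
      have key : ν1 v (x v) * (ν2 (parent v) v (x (parent v)) (x v) /
          (ν1 (parent v) (x (parent v)) * ν1 v (x v)))
          = ν2 (parent v) v (x (parent v)) (x v) / ν1 (parent v) (x (parent v)) := by
        field_simp
      rw [key, div_le_iff₀ hd]
      calc ν2 (parent v) v (x (parent v)) (x v)
          ≤ ⨆ b : X v, ν2 (parent v) v (x (parent v)) b :=
            le_ciSup (f := fun b : X v => ν2 (parent v) v (x (parent v)) b)
              (Set.Finite.bddAbove (Set.finite_range _)) (x v)
        _ = _ := hspec (x (parent v))
  · -- attainment
    intro v hv b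
    have hd := hν1 (parent v) b
    rcases hE2 v hv with hA | ⟨hB, hnA⟩
    · obtain ⟨hκ, hspec⟩ := (hcons2 _ hA).choose_spec
      dsimp only at hspec
      obtain ⟨c, hc⟩ := Finite.exists_max (fun a : X v => ν2 v (parent v) a b)
      have ha := hν1 v c
      refine ⟨c, ?_⟩
      intro x hxv hxp
      have hsup : ν2 v (parent v) c b
          = (hcons2 (v, parent v) hA).choose * ν1 (parent v) b := by
        rw [← hspec b]
        exact le_antisymm
          (le_ciSup (f := fun a : X v => ν2 v (parent v) a b)
            (Set.Finite.bddAbove (Set.finite_range _)) c) (ciSup_le hc)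
      simp only [hφ, hg, if_pos hA, dif_pos hA, hxv, hxp]
      rw [hsup]; field_simp
    · obtain ⟨hκ, hspec⟩ := (hcons1 _ hB).choose_spec
      dsimp only at hspec
      obtain ⟨c, hc⟩ := Finite.exists_max (fun a : X v => ν2 (parent v) v b a)
      have ha := hν1 v c
      refine ⟨c, ?_⟩
      intro x hxv hxp
      have hsup : ν2 (parent v) v b c
          = (hcons1 (parent v, v) hB).choose * ν1 (parent v) b := by
        rw [← hspec b]
        exact le_antisymm
          (le_ciSup (f := fun a : X v => ν2 (parent v) v b a)
            (Set.Finite.bddAbove (Set.finite_range _)) c) (ciSup_le hc)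
      simp only [hφ, hg, if_neg hnA, dif_neg hnA, dif_pos hB, hxv, hxp]
      rw [hsup]; field_simp
  · -- pinned edge term
    intro t ht hpt hst x
    have hnA : (t, parent t) ∉ E := by rw [hpt]; simpa using hE_orient (s, t) hst
    have h1 := hν1 s (x s)
    have h2 := hν1 t (x t)
    simp only [hφ, hg, if_neg hnA, hpt]
    field_simp


/-- Lemma 3 (sufficiency of edgewise consistency): if strictly positive `ν1, ν2` on a
finite tree satisfy the edgewise consistency condition
`max_{x_t'} ν_{st}(x_s, x_t') = κ ν_s(x_s)` (and symmetrically) for every edge, then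
`ν1` and `ν2` are, up to positive multiplicative constants, the single-node and
pairwise max-marginals of the distribution `q` they define. -/
theorem stmt_13 {V : Type*} [Fintype V] [DecidableEq V]
    (X : V → Type*) [∀ v, Fintype (X v)] [∀ v, Nonempty (X v)]
    (E : Finset (V × V))
    (hE_ne : ∀ p ∈ E, p.1 ≠ p.2) (hE_orient : ∀ p ∈ E, (p.2, p.1) ∉ E)
    (hTree : (SimpleGraph.fromRel fun s t => (s, t) ∈ E).IsTree)
    (ν1 : (s : V) → X s → ℝ) (ν2 : (s t : V) → X s → X t → ℝ)
    (hν1 : ∀ (s : V) (a : X s), 0 < ν1 s a)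
    (hν2 : ∀ p ∈ E, ∀ (a : X p.1) (b : X p.2), 0 < ν2 p.1 p.2 a b)
    (hcons1 : ∀ p ∈ E, ∃ κ : ℝ, 0 < κ ∧
      ∀ a : X p.1, (⨆ b : X p.2, ν2 p.1 p.2 a b) = κ * ν1 p.1 a)
    (hcons2 : ∀ p ∈ E, ∃ κ : ℝ, 0 < κ ∧
      ∀ b : X p.2, (⨆ a : X p.1, ν2 p.1 p.2 a b) = κ * ν1 p.2 b) :
    (∀ s : V, ∃ κ : ℝ, 0 < κ ∧ ∀ a : X s,
      ν1 s a = κ * ⨆ x : {y : (v : V) → X v // y s = a}, treeDist E ν1 ν2 x.1) ∧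
    (∀ p ∈ E, ∃ κ : ℝ, 0 < κ ∧ ∀ (a : X p.1) (b : X p.2),
      ν2 p.1 p.2 a b =
        κ * ⨆ x : {y : (v : V) → X v // y p.1 = a ∧ y p.2 = b},
              treeDist E ν1 ν2 x.1) := by
  classical
  constructor
  · -- single-node max-marginals
    intro s
    obtain ⟨parent, L, hpar, hsurj⟩ := tree_root_struct hTree s
    obtain ⟨T, K, hdec, hTpos, hKpos, hTle, hTatt, _⟩ :=
      core X E hE_ne hE_orient ν1 ν2 hν1 hν2 hcons1 hcons2 s parent L hpar hsurj
    set C := ∏ v ∈ Finset.univ.erase s, K v with hCdef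
    have hC : 0 < C :=
      Finset.prod_pos fun v hv => hKpos v (Finset.mem_erase.mp hv).1
    refine ⟨C⁻¹, inv_pos.mpr hC, ?_⟩
    intro a
    have hL : ∀ v, v ≠ s → L (parent v) < L v := by
      intro v h; have := (hpar v h).2; omega
    set pick : (v : V) → X (parent v) → X v := fun v b =>
      if h : v ≠ s then (hTatt v h b).choose else Classical.arbitrary _ with hpick
    set xstar := buildAux s parent L hL a pick with hxstar
    have hxs : xstar s = a := buildAux_self s parent L hL a pick
    have hterm : ∀ v, v ≠ s → T v xstar = K v := by
      intro v h
      have hx : xstar v = pick v (xstar (parent v)) :=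
        buildAux_ne s parent L hL a pick h
      have hx2 : pick v (xstar (parent v))
          = (hTatt v h (xstar (parent v))).choose := by
        simp only [hpick]; rw [dif_pos h]
      exact (hTatt v h (xstar (parent v))).choose_spec xstar (hx.trans hx2) rfl
    have hq : treeDist E ν1 ν2 xstar = ν1 s a * C := by
      rw [hdec, hxs]
      exact congrArg (ν1 s a * ·)
        (Finset.prod_congr rfl fun v hv => hterm v (Finset.mem_erase.mp hv).1)
    have hub : ∀ z : {y : (v : V) → X v // y s = a},
        treeDist E ν1 ν2 z.1 ≤ ν1 s a * C := by
      intro z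
      rw [hdec, z.2]
      refine mul_le_mul_of_nonneg_left ?_ (hν1 s a).le
      exact Finset.prod_le_prod
        (fun v hv => (hTpos v (Finset.mem_erase.mp hv).1 z.1).le)
        (fun v hv => hTle v (Finset.mem_erase.mp hv).1 z.1)
    haveI hne : Nonempty {y : (v : V) → X v // y s = a} := ⟨⟨xstar, hxs⟩⟩
    have hsup : (⨆ x : {y : (v : V) → X v // y s = a}, treeDist E ν1 ν2 x.1)
        = ν1 s a * C := by
      refine le_antisymm (ciSup_le hub) ?_
      rw [← hq]
      exact le_ciSup (f := fun x : {y : (v : V) → X v // y s = a} =>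
          treeDist E ν1 ν2 x.1)
        (Set.Finite.bddAbove (Set.finite_range _)) ⟨xstar, hxs⟩
    rw [hsup]
    field_simp
  · -- pairwise max-marginals
    intro p hp
    obtain ⟨s, t⟩ := p
    obtain ⟨parent, L, hpar, hsurj⟩ := tree_root_struct hTree s
    obtain ⟨T, K, hdec, hTpos, hKpos, hTle, hTatt, hpin⟩ :=
      core X E hE_ne hE_orient ν1 ν2 hν1 hν2 hcons1 hcons2 s parent L hpar hsurj
    have hts : t ≠ s := (hE_ne (s, t) hp).symm
    have hadj : (SimpleGraph.fromRel fun s t => (s, t) ∈ E).Adj s t := by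
      rw [SimpleGraph.fromRel_adj]
      exact ⟨hE_ne (s, t) hp, Or.inl hp⟩
    have hpt : parent t = s := by
      rcases hsurj s t hadj with ⟨h1, _⟩ | ⟨_, h2⟩
      · exact absurd rfl h1
      · exact h2
    set C := ∏ v ∈ (Finset.univ.erase s).erase t, K v with hCdef
    have hC : 0 < C :=
      Finset.prod_pos fun v hv =>
        hKpos v (Finset.mem_erase.mp (Finset.mem_erase.mp hv).2).1
    refine ⟨C⁻¹, inv_pos.mpr hC, ?_⟩
    intro a b
    have hsplit : ∀ x, treeDist E ν1 ν2 x
        = ν2 s t (x s) (x t) * ∏ v ∈ (Finset.univ.erase s).erase t, T v x := by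
      intro x
      rw [hdec x, ← Finset.mul_prod_erase (Finset.univ.erase s) (fun v => T v x)
        (Finset.mem_erase.mpr ⟨hts, Finset.mem_univ t⟩), ← mul_assoc,
        hpin t hts hpt hp x]
    have hL : ∀ v, v ≠ s → L (parent v) < L v := by
      intro v h; have := (hpar v h).2; omega
    set pick : (v : V) → X (parent v) → X v := fun v c =>
      if h : v = t then cast (congrArg X h).symm b
      else if h2 : v ≠ s then (hTatt v h2 c).choose
      else Classical.arbitrary _ with hpick
    set xstar := buildAux s parent L hL a pick with hxstar
    have hxs : xstar s = a := buildAux_self s parent L hL a pick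
    have hxt : xstar t = b := by
      have h1 : xstar t = pick t (xstar (parent t)) :=
        buildAux_ne s parent L hL a pick hts
      rw [h1]
      simp [hpick]
    have hterm : ∀ v, v ≠ s → v ≠ t → T v xstar = K v := by
      intro v h h2
      have hx : xstar v = pick v (xstar (parent v)) :=
        buildAux_ne s parent L hL a pick h
      have hx2 : pick v (xstar (parent v))
          = (hTatt v h (xstar (parent v))).choose := by
        simp only [hpick]; rw [dif_neg h2, dif_pos h]
      exact (hTatt v h (xstar (parent v))).choose_spec xstar (hx.trans hx2) rfl
    have hq : treeDist E ν1 ν2 xstar = ν2 s t a b * C := by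
      rw [hsplit, hxs, hxt]
      exact congrArg (ν2 s t a b * ·)
        (Finset.prod_congr rfl fun v hv =>
          hterm v (Finset.mem_erase.mp (Finset.mem_erase.mp hv).2).1
            (Finset.mem_erase.mp hv).1)
    have hub : ∀ z : {y : (v : V) → X v // y s = a ∧ y t = b},
        treeDist E ν1 ν2 z.1 ≤ ν2 s t a b * C := by
      intro z
      rw [hsplit, z.2.1, z.2.2]
      refine mul_le_mul_of_nonneg_left ?_ (hν2 (s, t) hp a b).le
      exact Finset.prod_le_prod
        (fun v hv =>
          (hTpos v (Finset.mem_erase.mp (Finset.mem_erase.mp hv).2).1 z.1).le)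
        (fun v hv =>
          hTle v (Finset.mem_erase.mp (Finset.mem_erase.mp hv).2).1 z.1)
    haveI hne : Nonempty {y : (v : V) → X v // y s = a ∧ y t = b} :=
      ⟨⟨xstar, hxs, hxt⟩⟩
    have hsup : (⨆ x : {y : (v : V) → X v // y s = a ∧ y t = b},
        treeDist E ν1 ν2 x.1) = ν2 s t a b * C := by
      refine le_antisymm (ciSup_le hub) ?_
      rw [← hq]
      exact le_ciSup (f := fun x : {y : (v : V) → X v // y s = a ∧ y t = b} =>
          treeDist E ν1 ν2 x.1)
        (Set.Finite.bddAbove (Set.finite_range _)) ⟨xstar, hxs, hxt⟩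
    rw [hsup]
    field_simp
end

section
/- Let T be a finite tree rooted at r, with max-marginals {ν_s, ν_{st}} of a strictly positive distribution p. Construct x* by choosing x*_r ∈ argmax ν_r, and recursively for each child t of parent s choosing x*_t ∈ argmax_{x_t} ν_{st}(x*_s, x_t). Then x* is a MAP configuration of p. -/
theorem sup_attained_aux {ι : Type*} [Finite ι] [Nonempty ι] (f : ι → ℝ) :
    ∃ i, (⨆ j, f j) = f i ∧ ∀ j, f j ≤ f i := by
  obtain ⟨i, hi⟩ := Finite.exists_max f
  exact ⟨i, le_antisymm (ciSup_le hi)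
    (le_ciSup (Set.Finite.bddAbove (Set.finite_range f)) i), hi⟩

theorem le_csup_aux {ι : Type*} [Finite ι] (f : ι → ℝ) (i : ι) : f i ≤ ⨆ j, f j :=
  le_ciSup (Set.Finite.bddAbove (Set.finite_range f)) i

theorem step_lemma_aux {V : Type*} [Fintype V] [DecidableEq V]
    (X : V → Type*) [∀ v, Fintype (X v)] [∀ v, Nonempty (X v)]
    (p : ((v : V) → X v) → ℝ) (hp : ∀ x, 0 < p x)
    (D : Finset V) (s q : V) (hs : s ∈ D) (hq : q ∉ D) (a : X q)
    (F G : ((v : V) → X v) → ℝ)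
    (hsplit : ∀ x, x q = a → p x = F x * G x)
    (hF : ∀ x y, (∀ t, t ∉ D → x t = y t) → F x = F y)
    (hG : ∀ x y, (∀ t, t ∈ D → x t = y t) → G x = G y)
    (bstar : X s)
    (hch : ∀ b : X s,
      (⨆ y : {y : (v : V) → X v // y q = a ∧ y s = b}, p y.1) ≤
        ⨆ y : {y : (v : V) → X v // y q = a ∧ y s = bstar}, p y.1)
    (x : (v : V) → X v) (hxmax : ∀ y, p y ≤ p x) (hxq : x q = a) :
    ∃ x', (∀ t, t ∉ D → x' t = x t) ∧ x' s = bstar ∧ ∀ y, p y ≤ p x' := by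
  classical
  have hqs : q ≠ s := fun h => hq (h ▸ hs)
  let glue : ((v : V) → X v) → ((v : V) → X v) → ((v : V) → X v) :=
    fun w z t => if t ∈ D then z t else w t
  have hglue_in : ∀ w z t, t ∈ D → glue w z t = z t := fun w z t ht => if_pos ht
  have hglue_out : ∀ w z t, t ∉ D → glue w z t = w t := fun w z t ht => if_neg ht
  have hglue_self : ∀ y, glue y y = y := by
    intro y; funext t; simp [glue]
  have x₀ : (v : V) → X v := Classical.arbitrary _
  -- product form
  have hpg : ∀ w z, w q = a →
      p (glue w z) = F (glue w x₀) * G (glue x₀ z) := by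
    intro w z hw
    have hq' : glue w z q = a := by rw [hglue_out _ _ _ hq, hw]
    rw [hsplit _ hq']
    congr 1
    · exact hF _ _ (fun t ht => by rw [hglue_out _ _ _ ht, hglue_out _ _ _ ht])
    · exact hG _ _ (fun t ht => by rw [hglue_in _ _ _ ht, hglue_in _ _ _ ht])
  haveI hne : ∀ b : X s, Nonempty {z : (v : V) → X v // z s = b} :=
    fun b => ⟨⟨Function.update x₀ s b, Function.update_self _ _ _⟩⟩
  haveI hne2 : ∀ b : X s, Nonempty {y : (v : V) → X v // y q = a ∧ y s = b} :=
    fun b => ⟨⟨Function.update (Function.update x₀ s b) q a,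
      Function.update_self _ _ _,
      by rw [Function.update_of_ne hqs.symm, Function.update_self]⟩⟩
  let Hw : ((v : V) → X v) → X s → ℝ :=
    fun w b => ⨆ z : {z : (v : V) → X v // z s = b}, p (glue w z.1)
  let h : X s → ℝ :=
    fun b => ⨆ y : {y : (v : V) → X v // y q = a ∧ y s = b}, p y.1
  have hch' : ∀ b, h b ≤ h bstar := hch
  have hHwpos : ∀ w b, 0 < Hw w b := fun w b =>
    lt_of_lt_of_le (hp _) (le_csup_aux (fun z : {z : (v : V) → X v // z s = b} =>
      p (glue w z.1)) (Classical.arbitrary _))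
  have hHwle : ∀ w b, w q = a → Hw w b ≤ h b := by
    intro w b hw
    refine ciSup_le fun z => ?_
    have h1 : glue w z.1 q = a := by rw [hglue_out _ _ _ hq, hw]
    have h2 : glue w z.1 s = b := by rw [hglue_in _ _ _ hs, z.2]
    exact le_csup_aux (fun y : {y : (v : V) → X v // y q = a ∧ y s = b} => p y.1)
      ⟨glue w z.1, h1, h2⟩
  have hhH : ∀ b, ∃ w, w q = a ∧ h b = Hw w b := by
    intro b
    obtain ⟨y, hy1, _⟩ := sup_attained_aux
      (fun y : {y : (v : V) → X v // y q = a ∧ y s = b} => p y.1)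
    refine ⟨y.1, y.2.1, le_antisymm ?_ (hHwle _ _ y.2.1)⟩
    show h b ≤ Hw y.1 b
    have : h b = p y.1 := hy1
    rw [this]
    have e : p y.1 = p (glue y.1 y.1) := by rw [hglue_self]
    rw [e]
    exact le_csup_aux (fun z : {z : (v : V) → X v // z s = b} => p (glue y.1 z.1))
      ⟨y.1, y.2.2⟩
  have hcross : ∀ w w' b b', w q = a → w' q = a →
      Hw w b * Hw w' b' ≤ Hw w b' * Hw w' b := by
    intro w w' b b' hw hw'
    obtain ⟨z1, hz1, _⟩ := sup_attained_aux
      (fun z : {z : (v : V) → X v // z s = b} => p (glue w z.1))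
    obtain ⟨z2, hz2, _⟩ := sup_attained_aux
      (fun z : {z : (v : V) → X v // z s = b'} => p (glue w' z.1))
    have e0 : Hw w b * Hw w' b' = p (glue w z1.1) * p (glue w' z2.1) := by
      rw [show Hw w b = p (glue w z1.1) from hz1, show Hw w' b' = p (glue w' z2.1) from hz2]
    rw [e0]
    have e : p (glue w z1.1) * p (glue w' z2.1)
        = p (glue w z2.1) * p (glue w' z1.1) := by
      rw [hpg _ _ hw, hpg _ _ hw', hpg _ z2.1 hw, hpg _ z1.1 hw']
      ring
    rw [e]
    have h1 : p (glue w z2.1) ≤ Hw w b' :=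
      le_csup_aux (fun z : {z : (v : V) → X v // z s = b'} => p (glue w z.1)) ⟨z2.1, z2.2⟩
    have h2 : p (glue w' z1.1) ≤ Hw w' b :=
      le_csup_aux (fun z : {z : (v : V) → X v // z s = b} => p (glue w' z.1)) ⟨z1.1, z1.2⟩
    exact mul_le_mul h1 h2 (le_of_lt (hp _)) (le_of_lt (hHwpos _ _))
  obtain ⟨w2, hw2q, hw2⟩ := hhH bstar
  have hHb0 : Hw x (x s) ≤ Hw x bstar := by
    have c := hcross x w2 (x s) bstar hxq hw2q
    have d : Hw w2 (x s) ≤ Hw w2 bstar := by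
      calc Hw w2 (x s) ≤ h (x s) := hHwle _ _ hw2q
        _ ≤ h bstar := hch' _
        _ = Hw w2 bstar := hw2
    have c2 := le_trans c (mul_le_mul_of_nonneg_left d (le_of_lt (hHwpos x bstar)))
    exact le_of_mul_le_mul_right c2 (hHwpos w2 bstar)
  obtain ⟨zst, hz1, _⟩ := sup_attained_aux
    (fun z : {z : (v : V) → X v // z s = bstar} => p (glue x z.1))
  refine ⟨glue x zst.1, fun t ht => hglue_out _ _ _ ht,
    by rw [hglue_in _ _ _ hs, zst.2], fun y => ?_⟩
  calc p y ≤ p x := hxmax y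
    _ = p (glue x x) := by rw [hglue_self]
    _ ≤ Hw x (x s) :=
        le_csup_aux (fun z : {z : (v : V) → X v // z s = x s} => p (glue x z.1)) ⟨x, rfl⟩
    _ ≤ Hw x bstar := hHb0
    _ = p (glue x zst.1) := hz1

set_option maxHeartbeats 1000000 in
/-- Dynamic-programming construction of a MAP configuration on a rooted tree
(proof of Lemma 4): the tree is encoded by a parent map `par` with root `r` and a
depth function witnessing acyclicity; `p` is a strictly positive distribution that
factorizes over the nodes and the parent-child edges.  If `x*_r` maximizes the root
max-marginal `ν_r(a) = max_{x : x_r = a} p(x)`, and recursively each `x*_s` (for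
`s ≠ r`) maximizes `b ↦ ν_{par(s),s}(x*_{par(s)}, b)` where
`ν_{par(s),s}(a,b) = max_{x : x_{par(s)} = a, x_s = b} p(x)`, then `x*` is a MAP
configuration of `p`. -/
theorem stmt_15 {V : Type*} [Fintype V] [DecidableEq V]
    (X : V → Type*) [∀ v, Fintype (X v)] [∀ v, Nonempty (X v)]
    (r : V) (par : V → V) (hpar_r : par r = r)
    (depth : V → ℕ) (hdepth_r : depth r = 0)
    (hdepth : ∀ s, s ≠ r → depth s = depth (par s) + 1)
    (p : ((v : V) → X v) → ℝ) (hp_pos : ∀ x, 0 < p x)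
    (ψ1 : (s : V) → X s → ℝ) (ψ2 : (s : V) → X (par s) → X s → ℝ)
    (hfact : ∀ x, p x =
      (∏ s, ψ1 s (x s)) * ∏ s ∈ Finset.univ.erase r, ψ2 s (x (par s)) (x s))
    (xstar : (v : V) → X v)
    (hroot : ∀ a : X r,
      (⨆ x : {y : (v : V) → X v // y r = a}, p x.1) ≤
        ⨆ x : {y : (v : V) → X v // y r = xstar r}, p x.1)
    (hchild : ∀ s, s ≠ r → ∀ b : X s,
      (⨆ x : {y : (v : V) → X v // y (par s) = xstar (par s) ∧ y s = b}, p x.1) ≤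
        ⨆ x : {y : (v : V) → X v //
                y (par s) = xstar (par s) ∧ y s = xstar s}, p x.1) :
    ∀ x, p x ≤ p xstar := by
  classical
  have hdepth_iter : ∀ (s : V), s ≠ r → ∀ (n : ℕ) (t : V),
      par^[n] t = s → depth t = depth s + n := by
    intro s hsr n
    induction n with
    | zero => intro t ht; simp only [Function.iterate_zero, id_eq] at ht; subst ht; omega
    | succ n ih =>
      intro t ht
      have htr : t ≠ r := by
        rintro rfl
        rw [Function.iterate_fixed hpar_r] at ht
        exact hsr ht.symm
      rw [Function.iterate_succ_apply] at ht
      have h1 := ih (par t) ht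
      have h2 := hdepth t htr
      omega
  -- nonempty instances
  haveI hne_r : ∀ (a : X r), Nonempty {y : (v : V) → X v // y r = a} :=
    fun a => ⟨⟨Function.update (Classical.arbitrary _) r a, Function.update_self _ _ _⟩⟩
  -- main induction on parent-closed finsets
  have key : ∀ (n : ℕ) (S : Finset V), S.card = n → (∀ t ∈ S, t ≠ r → par t ∈ S) →
      ∃ x : (v : V) → X v, (∀ t ∈ S, x t = xstar t) ∧ ∀ y, p y ≤ p x := by
    intro n
    induction n with
    | zero =>
      intro S hcard _
      obtain ⟨x, _, hx⟩ := sup_attained_aux p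
      refine ⟨x, fun t ht => absurd ht ?_, hx⟩
      simp [Finset.card_eq_zero.mp hcard]
    | succ n ih =>
      intro S hcard hclosed
      have hSne : S.Nonempty := Finset.card_pos.mp (by omega)
      obtain ⟨s, hsS, hsmax⟩ := Finset.exists_max_image S depth hSne
      by_cases hsr : s = r
      · -- S = {r}
        have hSsub : ∀ t ∈ S, t = r := by
          intro t ht
          by_contra hts
          have h1 := hsmax t ht
          rw [hsr, hdepth_r] at h1
          have h2 := hdepth t hts
          omega
        obtain ⟨xm, _, hxm⟩ := sup_attained_aux p
        obtain ⟨y, hy1, _⟩ := sup_attained_aux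
          (fun x : {y : (v : V) → X v // y r = xstar r} => p x.1)
        refine ⟨y.1, fun t ht => by rw [hSsub t ht]; exact y.2, fun z => ?_⟩
        have h1 : p xm ≤ ⨆ x : {yy : (v : V) → X v // yy r = xm r}, p x.1 :=
          le_csup_aux (fun x : {yy : (v : V) → X v // yy r = xm r} => p x.1) ⟨xm, rfl⟩
        calc p z ≤ p xm := hxm z
          _ ≤ ⨆ x : {yy : (v : V) → X v // yy r = xm r}, p x.1 := h1
          _ ≤ ⨆ x : {yy : (v : V) → X v // yy r = xstar r}, p x.1 := hroot (xm r)
          _ = p y.1 := hy1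
      · -- s ≠ r
        have hps : par s ∈ S := hclosed s hsS hsr
        have hdps : depth s = depth (par s) + 1 := hdepth s hsr
        have hpss : par s ≠ s := fun h => by rw [h] at hdps; omega
        have hcard' : (S.erase s).card = n := by
          rw [Finset.card_erase_of_mem hsS]; omega
        have hclosed' : ∀ t ∈ S.erase s, t ≠ r → par t ∈ S.erase s := by
          intro t ht htr
          have htS := Finset.mem_of_mem_erase ht
          refine Finset.mem_erase.mpr ⟨?_, hclosed t htS htr⟩
          intro hpts
          have h1 := hsmax t htS
          have h2 := hdepth t htr
          rw [hpts] at h2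
          omega
        obtain ⟨x, hxS', hxmax⟩ := ih (S.erase s) hcard' hclosed'
        have hsS' : s ∉ S.erase s := Finset.notMem_erase s S
        have hpsS' : par s ∈ S.erase s := Finset.mem_erase.mpr ⟨hpss, hps⟩
        -- the subtree D rooted at s
        set D : Finset V := Finset.univ.filter (fun t => ∃ m, par^[m] t = s) with hD
        have hmemD : ∀ t, t ∈ D ↔ ∃ m, par^[m] t = s := by
          intro t; simp [hD]
        have hsD : s ∈ D := (hmemD s).mpr ⟨0, rfl⟩
        have hrD : r ∉ D := by
          rw [hmemD]
          rintro ⟨m, hm⟩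
          rw [Function.iterate_fixed hpar_r] at hm
          exact hsr hm.symm
        have hqD : par s ∉ D := by
          rw [hmemD]
          rintro ⟨m, hm⟩
          have := hdepth_iter s hsr m (par s) hm
          omega
        have hDpar : ∀ t, t ∈ D → t ≠ s → t ≠ r ∧ par t ∈ D := by
          intro t ht hts
          obtain ⟨m, hm⟩ := (hmemD t).mp ht
          match m, hm with
          | 0, hm => exact absurd hm hts
          | m+1, hm =>
            have htr : t ≠ r := fun h => hrD (h ▸ ht)
            rw [Function.iterate_succ_apply] at hm
            exact ⟨htr, (hmemD _).mpr ⟨m, hm⟩⟩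
        have hcomplD : ∀ t, t ∉ D → par t ∉ D := by
          intro t ht hpt
          obtain ⟨m, hm⟩ := (hmemD _).mp hpt
          exact ht ((hmemD t).mpr ⟨m+1, by rw [Function.iterate_succ_apply]; exact hm⟩)
        have hS'D : ∀ t ∈ S.erase s, t ∉ D := by
          intro t htS' htD
          obtain ⟨m, hm⟩ := (hmemD t).mp htD
          clear htD
          induction m generalizing t with
          | zero =>
            simp only [Function.iterate_zero, id_eq] at hm
            exact hsS' (hm ▸ htS')
          | succ m ihm =>
            have htr : t ≠ r := by
              rintro rfl
              rw [Function.iterate_fixed hpar_r] at hm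
              exact hsr hm.symm
            rw [Function.iterate_succ_apply] at hm
            exact ihm (par t) (hclosed' t htS' htr) hm
        -- factorization across the boundary of D
        set Ff : ((v : V) → X v) → ℝ := fun x =>
          (∏ t ∈ Finset.univ.filter (fun t => t ∉ D), ψ1 t (x t)) *
          ∏ t ∈ (Finset.univ.erase r).filter (fun t => t ∉ D), ψ2 t (x (par t)) (x t)
          with hFf
        set Gf : ((v : V) → X v) → ℝ := fun x =>
          ((∏ t ∈ D, ψ1 t (x t)) * ∏ t ∈ D.erase s, ψ2 t (x (par t)) (x t)) *
          ψ2 s (xstar (par s)) (x s) with hGf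
        have hsplit : ∀ x : (v : V) → X v, x (par s) = xstar (par s) →
            p x = Ff x * Gf x := by
          intro x hxa
          rw [hfact x]
          simp only [hFf, hGf]
          have hDfilter : Finset.univ.filter (fun t => t ∈ D) = D := by
            ext t; simp
          have hDfilter2 : (Finset.univ.erase r).filter (fun t => t ∈ D) = D := by
            ext t
            constructor
            · intro ht; exact (Finset.mem_filter.mp ht).2
            · intro ht
              exact Finset.mem_filter.mpr
                ⟨Finset.mem_erase.mpr ⟨fun hr => hrD (hr ▸ ht), Finset.mem_univ t⟩, ht⟩
          have e1 : (∏ t, ψ1 t (x t)) =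
              (∏ t ∈ D, ψ1 t (x t)) *
              ∏ t ∈ Finset.univ.filter (fun t => t ∉ D), ψ1 t (x t) := by
            rw [← Finset.prod_filter_mul_prod_filter_not Finset.univ (fun t => t ∈ D)
              (fun t => ψ1 t (x t)), hDfilter]
          have e2 : (∏ t ∈ Finset.univ.erase r, ψ2 t (x (par t)) (x t)) =
              (∏ t ∈ D, ψ2 t (x (par t)) (x t)) *
              ∏ t ∈ (Finset.univ.erase r).filter (fun t => t ∉ D), ψ2 t (x (par t)) (x t) := by
            rw [← Finset.prod_filter_mul_prod_filter_not (Finset.univ.erase r)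
              (fun t => t ∈ D) (fun t => ψ2 t (x (par t)) (x t)), hDfilter2]
          have e3 : (∏ t ∈ D, ψ2 t (x (par t)) (x t)) =
              ψ2 s (x (par s)) (x s) * ∏ t ∈ D.erase s, ψ2 t (x (par t)) (x t) :=
            (Finset.mul_prod_erase D _ hsD).symm
          rw [e1, e2, e3, hxa]
          ring
        have hFcong : ∀ x y : (v : V) → X v, (∀ t, t ∉ D → x t = y t) → Ff x = Ff y := by
          intro x y hxy
          simp only [hFf]
          congr 1
          · exact Finset.prod_congr rfl fun t ht => by
              rw [hxy t (Finset.mem_filter.mp ht).2]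
          · exact Finset.prod_congr rfl fun t ht => by
              have h2 := (Finset.mem_filter.mp ht).2
              rw [hxy t h2, hxy (par t) (hcomplD t h2)]
        have hGcong : ∀ x y : (v : V) → X v, (∀ t, t ∈ D → x t = y t) → Gf x = Gf y := by
          intro x y hxy
          simp only [hGf]
          rw [hxy s hsD]
          congr 1
          congr 1
          · exact Finset.prod_congr rfl fun t ht => by rw [hxy t ht]
          · exact Finset.prod_congr rfl fun t ht => by
              obtain ⟨hts, htD⟩ := Finset.mem_erase.mp ht
              rw [hxy t htD, hxy (par t) (hDpar t htD hts).2]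
        have hxq : x (par s) = xstar (par s) := hxS' (par s) hpsS'
        obtain ⟨x', hx'out, hx's, hx'max⟩ :=
          step_lemma_aux X p hp_pos D s (par s) hsD hqD (xstar (par s)) Ff Gf
            hsplit hFcong hGcong (xstar s) (hchild s hsr) x hxmax hxq
        refine ⟨x', fun t ht => ?_, hx'max⟩
        by_cases hts : t = s
        · rw [hts]; exact hx's
        · have htS' : t ∈ S.erase s := Finset.mem_erase.mpr ⟨hts, ht⟩
          rw [hx'out t (hS'D t htS'), hxS' t htS']
  obtain ⟨x, hxall, hxmax⟩ := key Finset.univ.card Finset.univ rfl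
    (fun t _ _ => Finset.mem_univ _)
  have hx : x = xstar := funext fun t => hxall t (Finset.mem_univ t)
  intro y
  rw [← hx]
  exact hxmax y
end

section
/- If for every vertex s of a tree T the max-marginal ν_s has a unique maximizer x*_s, then the MAP configuration of the tree-structured distribution p is unique and equals (x*_s)_{s ∈ V}. -/
/-- Unique node maximizers determine the unique MAP configuration: for a strictly
positive distribution `p` factorizing over the nodes and edges of a finite tree, if
for every vertex `s` the single-node max-marginal `ν_s(a) = max_{x : x_s = a} p(x)`
has `x*_s` as its unique maximizer, then `x*` is the unique MAP configuration of `p`. -/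
theorem stmt_16 {V : Type*} [Fintype V] [DecidableEq V]
    (X : V → Type*) [∀ v, Fintype (X v)] [∀ v, Nonempty (X v)]
    (E : Finset (V × V))
    (hE_ne : ∀ p ∈ E, p.1 ≠ p.2) (hE_orient : ∀ p ∈ E, (p.2, p.1) ∉ E)
    (hTree : (SimpleGraph.fromRel fun s t => (s, t) ∈ E).IsTree)
    (p : ((v : V) → X v) → ℝ) (hp_pos : ∀ x, 0 < p x)
    (ψ1 : (s : V) → X s → ℝ) (ψ2 : (s t : V) → X s → X t → ℝ)
    (hfact : ∀ x, p x =
      (∏ s, ψ1 s (x s)) * ∏ pr ∈ E, ψ2 pr.1 pr.2 (x pr.1) (x pr.2))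
    (xstar : (v : V) → X v)
    (hunique : ∀ (s : V) (a : X s), a ≠ xstar s →
      (⨆ x : {y : (v : V) → X v // y s = a}, p x.1) <
        ⨆ x : {y : (v : V) → X v // y s = xstar s}, p x.1) :
    (∀ y, p y ≤ p xstar) ∧ (∀ y, (∀ z, p z ≤ p y) → y = xstar) := by
  -- any global maximizer equals xstar
  have key : ∀ y, (∀ z, p z ≤ p y) → y = xstar := by
    intro y hy
    funext s
    by_contra hne
    have h1 := hunique s (y s) hne
    have hbdd : ∀ (a : X s), BddAbove (Set.range fun x : {z : (v : V) → X v // z s = a} => p x.1) :=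
      fun a => (Set.finite_range _).bddAbove
    -- p y ≤ sup over slice y s
    have h2 : p y ≤ ⨆ x : {z : (v : V) → X v // z s = y s}, p x.1 :=
      le_ciSup (hbdd (y s)) ⟨y, rfl⟩
    -- sup over slice xstar s ≤ p y
    have hne' : Nonempty {z : (v : V) → X v // z s = xstar s} :=
      ⟨⟨Function.update y s (xstar s), Function.update_self s (xstar s) y⟩⟩
    have h3 : (⨆ x : {z : (v : V) → X v // z s = xstar s}, p x.1) ≤ p y :=
      ciSup_le fun x => hy x.1
    exact absurd (h2.trans_lt (h1.trans_le h3)) (lt_irrefl _)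
  obtain ⟨y0, hy0⟩ := Finite.exists_max p
  have := key y0 hy0
  subst this
  exact ⟨hy0, key⟩
end

section
/- Let G = (V,E), and for each edge let ρ_{st} ∈ (0,1]. Given strictly positive messages M_{ts} : X_s → ℝ_{>0}, define for each spanning tree T in the support of ρ the function θ(T)(x) = ∑_{s∈V} log ν_s(x_s) + ∑_{(s,t)∈E(T)} log(ν_{st}(x_s,x_t)/(ν_s(x_s)ν_t(x_t))), where ν_s(x_s) ∝ exp(θ̄_s(x_s)) ∏_{v∈Γ(s)} M_{vs}(x_s)^{ρ_{vs}} and ν_{st}(x_s,x_t) ∝ exp(θ̄_{st}(x_s,x_t)/ρ_{st} + θ̄_s(x_s) + θ̄_t(x_t)) · [∏_{v∈Γ(s)∖t} M_{vs}(x_s)^{ρ_{vs}} / M_{ts}(x_s)^{1−ρ_{ts}}] · [∏_{v∈Γ(t)∖s} M_{vt}(x_t)^{ρ_{vt}} / M_{st}(x_t)^{1−ρ_{st}}]. If ρ_{st} equals the probability that edge (s,t) appears in a tree drawn from ρ, then for all x, ∑_T ρ(T) θ(T)(x) = ∑_s θ̄_s(x_s) + ∑_{(s,t)∈E} θ̄_{st}(x_s,x_t)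 + C for a constant C independent of x. -/
/-- The single-node pseudo-max-marginal defined (up to the positive constant `c1 s`)
by the messages: `ν_s(x_s) ∝ exp(θ̄_s(x_s)) ∏_{v ∈ Γ(s)} M_{vs}(x_s)^{ρ_{vs}}`,
where the neighborhood `Γ(s)` is read off from the oriented edge set `E`. -/
noncomputable def nu1 {V : Type*} [Fintype V] [DecidableEq V] {X : V → Type*}
    (E : Finset (V × V)) (θN : (s : V) → X s → ℝ) (ρw : V → V → ℝ)
    (M : (v s : V) → X s → ℝ) (c1 : V → ℝ) (s : V) (a : X s) : ℝ :=
  c1 s * Real.exp (θN s a) *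
    ∏ v ∈ Finset.univ.filter (fun u => (s, u) ∈ E ∨ (u, s) ∈ E),
      (M v s a) ^ (ρw v s)

/-- The pairwise pseudo-max-marginal defined (up to the positive constant `c2 s t`)
by the messages:
`ν_{st}(x_s,x_t) ∝ exp(θ̄_{st}/ρ_{st} + θ̄_s + θ̄_t) ·
  [∏_{v ∈ Γ(s)∖t} M_{vs}^{ρ_{vs}} / M_{ts}^{1−ρ_{ts}}] ·
  [∏_{v ∈ Γ(t)∖s} M_{vt}^{ρ_{vt}} / M_{st}^{1−ρ_{st}}]`. -/
noncomputable def nu2 {V : Type*} [Fintype V] [DecidableEq V] {X : V → Type*}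
    (E : Finset (V × V)) (θN : (s : V) → X s → ℝ)
    (θE : (s t : V) → X s → X t → ℝ) (ρw : V → V → ℝ)
    (M : (v s : V) → X s → ℝ) (c2 : V → V → ℝ)
    (s t : V) (a : X s) (b : X t) : ℝ :=
  c2 s t * Real.exp (θE s t a b / ρw s t + θN s a + θN t b) *
    ((∏ v ∈ (Finset.univ.filter fun u => (s, u) ∈ E ∨ (u, s) ∈ E).erase t,
        (M v s a) ^ (ρw v s)) / (M t s a) ^ (1 - ρw t s)) *
    ((∏ v ∈ (Finset.univ.filter fun u => (t, u) ∈ E ∨ (u, t) ∈ E).erase s,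
        (M v t b) ^ (ρw v t)) / (M s t b) ^ (1 - ρw s t))

/-- The tree-structured exponential parameter determined by the pseudo-max-marginals
via the max-marginal factorization:
`θ(T)(x) = ∑_s log ν_s(x_s) + ∑_{(s,t) ∈ E(T)} log (ν_{st}(x_s,x_t)/(ν_s(x_s) ν_t(x_t)))`. -/
noncomputable def thetaTree {V : Type*} [Fintype V] [DecidableEq V] {X : V → Type*}
    (E : Finset (V × V)) (θN : (s : V) → X s → ℝ)
    (θE : (s t : V) → X s → X t → ℝ) (ρw : V → V → ℝ)
    (M : (v s : V) → X s → ℝ) (c1 : V → ℝ) (c2 : V → V → ℝ)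
    (Ted : Finset (V × V)) (x : (v : V) → X v) : ℝ :=
  (∑ s, Real.log (nu1 E θN ρw M c1 s (x s))) +
    ∑ p ∈ Ted, Real.log (nu2 E θN θE ρw M c2 p.1 p.2 (x p.1) (x p.2) /
      (nu1 E θN ρw M c1 p.1 (x p.1) * nu1 E θN ρw M c1 p.2 (x p.2)))

/-!
Taking logarithms, `log ν_s` is `θ̄_s` plus the `ρ`-weighted log-messages into `s`, and
`log (ν_{st} / (ν_s ν_t))` is `θ̄_{st} / ρ_{st}` minus `log M_{ts}(x_s) + log M_{st}(x_t)`,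
because the factor `M_{ts}^{ρ_{ts}}` left out of `ν_{st}` and its denominator
`M_{ts}^{1 - ρ_{ts}}` combine to a full power of `M_{ts}`. Averaging over trees weights each
edge term by its appearance probability `ρ_{st}`, which turns `θ̄_{st} / ρ_{st}` into `θ̄_{st}`
and makes the edge terms `-ρ_{st} (log M_{ts} + log M_{st})` cancel exactly against the
log-messages in the node terms, leaving only constants.
-/

open Finset Real

section Neighbors

variable {V : Type*} [Fintype V] [DecidableEq V]

/-- The neighbourhood `Γ(s)` of the paper; `E` lists each edge in one orientation. -/
def nbhd (E : Finset (V × V)) (s : V) : Finset V := {u | (s, u) ∈ E ∨ (u, s) ∈ E}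

lemma mem_nbhd_of_mem {E : Finset (V × V)} {s t : V} (h : (s, t) ∈ E) :
    t ∈ nbhd E s ∧ s ∈ nbhd E t := by
  simp [nbhd, h]

lemma sum_sum_nbhd {β : Type*} [AddCommMonoid β] (E : Finset (V × V))
    (hE : ∀ p ∈ E, (p.2, p.1) ∉ E) (f : V → V → β) :
    ∑ s, ∑ v ∈ nbhd E s, f s v = ∑ p ∈ E, (f p.1 p.2 + f p.2 p.1) := by
  have hdisj : Disjoint E (E.map (Equiv.prodComm V V).toEmbedding) := by
    rw [disjoint_left]
    intro p hp hp'
    obtain ⟨q, hq, rfl⟩ := mem_map.mp hp'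
    exact hE q hq hp
  rw [← sum_finset_product' (E ∪ E.map (Equiv.prodComm V V).toEmbedding) univ (nbhd E)
      (fun p => by simp [nbhd, Or.comm, Prod.swap]),
    sum_union hdisj, sum_map, ← sum_add_distrib]
  rfl

end Neighbors

lemma sum_mul_sum_eq_sum_sum_filter_mul {ι κ R : Type*} [Fintype ι] [DecidableEq κ]
    [CommSemiring R] (ρ : ι → R) (E : Finset κ) (ET : ι → Finset κ) (hET : ∀ T, ET T ⊆ E)
    (g : κ → R) :
    ∑ T, ρ T * ∑ p ∈ ET T, g p = ∑ p ∈ E, (∑ T with p ∈ ET T, ρ T) * g p := by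
  simp_rw [mul_sum, sum_mul]
  exact sum_comm' fun T p => by simpa using fun hp => hET T hp

lemma prod_erase_rpow_div_rpow_pos {V : Type*} [DecidableEq V] {X : V → Type*}
    (ρw : V → V → ℝ) {M : (v s : V) → X s → ℝ} (hM : ∀ (v s : V) (a : X s), 0 < M v s a)
    (S : Finset V) {u : V} (w : V) (c : X u) :
    0 < (∏ v ∈ S.erase w, M v u c ^ ρw v u) / M w u c ^ (1 - ρw w u) :=
  div_pos (prod_pos fun v _ => rpow_pos_of_pos (hM v u c) _) (rpow_pos_of_pos (hM w u c) _)

section Marginals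

variable {V : Type*} [Fintype V] [DecidableEq V] {X : V → Type*}
  (E : Finset (V × V)) (θN : (s : V) → X s → ℝ) (θE : (s t : V) → X s → X t → ℝ)
  (ρw : V → V → ℝ) {M : (v s : V) → X s → ℝ} {c1 : V → ℝ} {c2 : V → V → ℝ}

lemma nu1_pos (hM : ∀ (v s : V) (a : X s), 0 < M v s a) (hc1 : ∀ s, 0 < c1 s)
    (s : V) (a : X s) : 0 < nu1 E θN ρw M c1 s a := by
  have := hc1 s
  exact mul_pos (by positivity) (prod_pos fun v _ => rpow_pos_of_pos (hM v s a) _)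

lemma nu2_pos (hM : ∀ (v s : V) (a : X s), 0 < M v s a) (hc2 : ∀ s t, 0 < c2 s t)
    (s t : V) (a : X s) (b : X t) : 0 < nu2 E θN θE ρw M c2 s t a b := by
  have := hc2 s t
  exact mul_pos (mul_pos (by positivity) (prod_erase_rpow_div_rpow_pos ρw hM _ t a))
    (prod_erase_rpow_div_rpow_pos ρw hM _ s b)

lemma log_nu1 (hM : ∀ (v s : V) (a : X s), 0 < M v s a) (hc1 : ∀ s, 0 < c1 s)
    (s : V) (a : X s) :
    log (nu1 E θN ρw M c1 s a) =
      log (c1 s) + θN s a + ∑ v ∈ nbhd E s, ρw v s * log (M v s a) := by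
  have hpow : ∀ v, 0 < M v s a ^ ρw v s := fun v => rpow_pos_of_pos (hM v s a) _
  have := hc1 s
  rw [nu1, log_mul (by positivity) (prod_pos fun v _ => hpow v).ne',
    log_mul (hc1 s).ne' (exp_ne_zero _), log_exp, log_prod fun v _ => (hpow v).ne']
  exact congrArg _ (sum_congr rfl fun v _ => log_rpow (hM v s a) _)

lemma log_nu2 (hM : ∀ (v s : V) (a : X s), 0 < M v s a) (hc2 : ∀ s t, 0 < c2 s t)
    {s t : V} (ht : t ∈ nbhd E s) (hs : s ∈ nbhd E t) (a : X s) (b : X t) :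
    log (nu2 E θN θE ρw M c2 s t a b) =
      log (c2 s t) + θE s t a b / ρw s t + θN s a + θN t b +
        (∑ v ∈ nbhd E s, ρw v s * log (M v s a) - log (M t s a)) +
        (∑ v ∈ nbhd E t, ρw v t * log (M v t b) - log (M s t b)) := by
  have log_msg : ∀ {u w : V} (c : X u), w ∈ nbhd E u →
      log ((∏ v ∈ (nbhd E u).erase w, M v u c ^ ρw v u) / M w u c ^ (1 - ρw w u)) =
        ∑ v ∈ nbhd E u, ρw v u * log (M v u c) - log (M w u c) := by
    intro u w c hw
    have hpow : ∀ v, 0 < M v u c ^ ρw v u := fun v => rpow_pos_of_pos (hM v u c) _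
    rw [log_div (prod_pos fun v _ => hpow v).ne' (rpow_pos_of_pos (hM w u c) _).ne',
      log_prod fun v _ => (hpow v).ne', log_rpow (hM w u c), ← sum_erase_add _ _ hw]
    simp_rw [log_rpow (hM _ u c)]
    ring
  have hc := hc2 s t
  have ha := prod_erase_rpow_div_rpow_pos ρw hM (nbhd E s) t a
  have hb := prod_erase_rpow_div_rpow_pos ρw hM (nbhd E t) s b
  rw [nu2, ← nbhd.eq_1 E s, ← nbhd.eq_1 E t, ← log_msg a ht, ← log_msg b hs,
    log_mul (mul_pos (by positivity) ha).ne' hb.ne', log_mul (by positivity) ha.ne',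
    log_mul hc.ne' (exp_ne_zero _), log_exp]
  ring

lemma log_nu2_div_nu1_mul_nu1 (hM : ∀ (v s : V) (a : X s), 0 < M v s a)
    (hc1 : ∀ s, 0 < c1 s) (hc2 : ∀ s t, 0 < c2 s t) {s t : V} (hst : (s, t) ∈ E)
    (a : X s) (b : X t) :
    log (nu2 E θN θE ρw M c2 s t a b / (nu1 E θN ρw M c1 s a * nu1 E θN ρw M c1 t b)) =
      log (c2 s t) - log (c1 s) - log (c1 t) + θE s t a b / ρw s t -
        (log (M t s a) + log (M s t b)) := by
  have hs := nu1_pos E θN ρw hM hc1 s a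
  have ht := nu1_pos E θN ρw hM hc1 t b
  rw [log_div (nu2_pos E θN θE ρw hM hc2 s t a b).ne' (mul_pos hs ht).ne',
    log_mul hs.ne' ht.ne', log_nu1 E θN ρw hM hc1, log_nu1 E θN ρw hM hc1,
    log_nu2 E θN θE ρw hM hc2 (mem_nbhd_of_mem hst).1 (mem_nbhd_of_mem hst).2]
  ring

lemma sum_log_nu1 (hE : ∀ p ∈ E, (p.2, p.1) ∉ E) (hρw : ∀ s t, ρw s t = ρw t s)
    (hM : ∀ (v s : V) (a : X s), 0 < M v s a) (hc1 : ∀ s, 0 < c1 s) (x : (v : V) → X v) :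
    ∑ s, log (nu1 E θN ρw M c1 s (x s)) =
      ∑ s, log (c1 s) + ∑ s, θN s (x s) +
        ∑ p ∈ E, ρw p.1 p.2 * (log (M p.2 p.1 (x p.1)) + log (M p.1 p.2 (x p.2))) := by
  simp_rw [log_nu1 E θN ρw hM hc1, sum_add_distrib,
    sum_sum_nbhd E hE fun s v => ρw v s * log (M v s (x s)), hρw _ _]
  simp only [mul_add, add_comm]

lemma sum_mul_thetaTree {𝕋 : Type*} [Fintype 𝕋] (ρ : 𝕋 → ℝ) (hρ : ∑ T, ρ T = 1)
    (ET : 𝕋 → Finset (V × V)) (hET : ∀ T, ET T ⊆ E)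
    (happear : ∀ p ∈ E, ρw p.1 p.2 = ∑ T with p ∈ ET T, ρ T) (x : (v : V) → X v) :
    ∑ T, ρ T * thetaTree E θN θE ρw M c1 c2 (ET T) x =
      ∑ s, log (nu1 E θN ρw M c1 s (x s)) +
        ∑ p ∈ E, ρw p.1 p.2 * log (nu2 E θN θE ρw M c2 p.1 p.2 (x p.1) (x p.2) /
          (nu1 E θN ρw M c1 p.1 (x p.1) * nu1 E θN ρw M c1 p.2 (x p.2))) := by
  simp only [thetaTree, mul_add, sum_add_distrib, ← sum_mul, hρ, one_mul,
    sum_mul_sum_eq_sum_sum_filter_mul ρ E ET hET]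
  exact congrArg _ (sum_congr rfl fun p hp => by rw [happear p hp])

end Marginals

theorem stmt_18_general {V : Type*} [Fintype V] [DecidableEq V] {X : V → Type*}
    {𝕋 : Type*} [Fintype 𝕋]
    (E : Finset (V × V))
    (hE_orient : ∀ p ∈ E, (p.2, p.1) ∉ E)
    (ρ : 𝕋 → ℝ) (hρ1 : ∑ T, ρ T = 1)
    (ET : 𝕋 → Finset (V × V)) (hET : ∀ T, ET T ⊆ E)
    (ρw : V → V → ℝ) (hρw_symm : ∀ s t, ρw s t = ρw t s)
    (hρw_pos : ∀ p ∈ E, 0 < ρw p.1 p.2)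
    (happear : ∀ p ∈ E,
      ρw p.1 p.2 = ∑ T ∈ Finset.univ.filter (fun T => p ∈ ET T), ρ T)
    (θN : (s : V) → X s → ℝ) (θE : (s t : V) → X s → X t → ℝ)
    (M : (v s : V) → X s → ℝ) (hM : ∀ (v s : V) (a : X s), 0 < M v s a)
    (c1 : V → ℝ) (hc1 : ∀ s, 0 < c1 s)
    (c2 : V → V → ℝ) (hc2 : ∀ s t, 0 < c2 s t) :
    ∃ C : ℝ, ∀ x : (v : V) → X v,
      ∑ T, ρ T * thetaTree E θN θE ρw M c1 c2 (ET T) x =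
        (∑ s, θN s (x s)) + (∑ p ∈ E, θE p.1 p.2 (x p.1) (x p.2)) + C := by
  refine ⟨∑ s, log (c1 s) +
    ∑ p ∈ E, ρw p.1 p.2 * (log (c2 p.1 p.2) - log (c1 p.1) - log (c1 p.2)), fun x => ?_⟩
  have edge_term : ∀ p ∈ E,
      ρw p.1 p.2 * log (nu2 E θN θE ρw M c2 p.1 p.2 (x p.1) (x p.2) /
        (nu1 E θN ρw M c1 p.1 (x p.1) * nu1 E θN ρw M c1 p.2 (x p.2))) =
      θE p.1 p.2 (x p.1) (x p.2) +
        ρw p.1 p.2 * (log (c2 p.1 p.2) - log (c1 p.1) - log (c1 p.2)) -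
        ρw p.1 p.2 * (log (M p.2 p.1 (x p.1)) + log (M p.1 p.2 (x p.2))) := by
    rintro ⟨s, t⟩ hst
    have := (hρw_pos _ hst).ne'
    rw [log_nu2_div_nu1_mul_nu1 E θN θE ρw hM hc1 hc2 hst]
    field_simp
    ring
  rw [sum_mul_thetaTree E θN θE ρw ρ hρ1 ET hET happear,
    sum_log_nu1 E θN ρw hE_orient hρw_symm hM hc1,
    sum_congr rfl edge_term, sum_sub_distrib, sum_add_distrib]
  ring

/-- Lemma 7: for any choice of strictly positive messages, the tree-structured
parameters defined by the pseudo-max-marginals form a ρ-reparameterization of the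
original distribution: if each edge weight `ρw` equals the probability that the edge
appears in a tree drawn from the distribution `ρ` over the trees `ET T ⊆ E`, then
`∑_T ρ(T) θ(T)(x) = ∑_s θ̄_s(x_s) + ∑_{(s,t) ∈ E} θ̄_{st}(x_s,x_t) + C` for a
constant `C` independent of `x` (all messages cancel). -/
theorem stmt_18 {V : Type*} [Fintype V] [DecidableEq V] {X : V → Type*}
    {𝕋 : Type*} [Fintype 𝕋]
    (E : Finset (V × V))
    (hE_ne : ∀ p ∈ E, p.1 ≠ p.2) (hE_orient : ∀ p ∈ E, (p.2, p.1) ∉ E)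
    (ρ : 𝕋 → ℝ) (hρ0 : ∀ T, 0 ≤ ρ T) (hρ1 : ∑ T, ρ T = 1)
    (ET : 𝕋 → Finset (V × V)) (hET : ∀ T, ET T ⊆ E)
    (ρw : V → V → ℝ) (hρw_symm : ∀ s t, ρw s t = ρw t s)
    (hρw_pos : ∀ p ∈ E, 0 < ρw p.1 p.2) (hρw_le : ∀ p ∈ E, ρw p.1 p.2 ≤ 1)
    (happear : ∀ p ∈ E,
      ρw p.1 p.2 = ∑ T ∈ Finset.univ.filter (fun T => p ∈ ET T), ρ T)
    (θN : (s : V) → X s → ℝ) (θE : (s t : V) → X s → X t → ℝ)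
    (M : (v s : V) → X s → ℝ) (hM : ∀ (v s : V) (a : X s), 0 < M v s a)
    (c1 : V → ℝ) (hc1 : ∀ s, 0 < c1 s)
    (c2 : V → V → ℝ) (hc2 : ∀ s t, 0 < c2 s t) :
    ∃ C : ℝ, ∀ x : (v : V) → X v,
      ∑ T, ρ T * thetaTree E θN θE ρw M c1 c2 (ET T) x =
        (∑ s, θN s (x s)) + (∑ p ∈ E, θE p.1 p.2 (x p.1) (x p.2)) + C :=
  stmt_18_general E hE_orient ρ hρ1 ET hET ρw hρw_symm hρw_pos happear θN θE M hM c1 hc1 c2 hc2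
end
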